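/- arXiv:1701.00429 — 4 statements merged into one kernel-verified Lean document; each statement's English description precedes it below -/
import Mathlib

section
/- (Lemma 4.4) For every p ∈ {0, …, n} and every index 1 ≤ i ≤ l_p, the value a_i^{(p)} is a well-defined integer (in particular it is not the undefined value −∞) and satisfies 0 ≤ a_i^{(p)} < a_{i−1}^{(p)}; hence the sequence a_0^{(p)} > a_1^{(p)} > ⋯ > a_{l_p}^{(p)} is strictly decreasing and all its terms are non-negative. -/
/-- `d(p) = max { s j : t j ≤ p }`, with `⊥` meaning "undefined" (i.e. `-∞`). -/
noncomputable def dvalue (m : ℕ) (s t : ℕ → ℤ) (p : ℤ) : WithBot ℤ :=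
  ((Finset.range m).filter (fun j => t j ≤ p)).sup (fun j => (s j : WithBot ℤ))

/-- `d†(p) = min { t j : s j ≥ p }`, with `⊤` meaning "undefined" (i.e. `+∞`). -/
noncomputable def ddual (m : ℕ) (s t : ℕ → ℤ) (p : ℤ) : WithTop ℤ :=
  ((Finset.range m).filter (fun j => p ≤ s j)).inf (fun j => (t j : WithTop ℤ))

/-- The extension of `d` to `WithBot ℤ`, sending `⊥` to `⊥`. -/
noncomputable def dW (m : ℕ) (s t : ℕ → ℤ) : WithBot ℤ → WithBot ℤ :=
  WithBot.recBotCoe ⊥ (dvalue m s t)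

/-- The extension of `d†` to `WithTop ℤ`, sending `⊤` to `⊤`. -/
noncomputable def dtW (m : ℕ) (s t : ℕ → ℤ) : WithTop ℤ → WithTop ℤ :=
  WithTop.recTopCoe ⊤ (ddual m s t)

/-- The (total extension of the) sequence `a_i^{(p)}`:
`a_0 = p`, `a_1 = p - 1`, `a_{i+2} = d(a_i)`.  For `i ≤ l_p` this agrees with the
sequence of the paper. -/
noncomputable def aSeq (m : ℕ) (s t : ℕ → ℤ) (p : ℤ) : ℕ → WithBot ℤ
  | 0 => (p : WithBot ℤ)
  | 1 => ((p - 1 : ℤ) : WithBot ℤ)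
  | i + 2 => dW m s t (aSeq m s t p i)

/-- The length `l_p`: `l_0 = 0`, and for `p ≠ 0` it is the least `j ≥ 1` with
`d(a_{j-1}^{(p)}) = d(a_j^{(p)})` (undefined values compared as `⊥`). -/
noncomputable def lSeq (m : ℕ) (s t : ℕ → ℤ) (p : ℤ) : ℕ :=
  if p = 0 then 0
  else sInf {j : ℕ | 1 ≤ j ∧ dW m s t (aSeq m s t p (j - 1)) = dW m s t (aSeq m s t p j)}

/-- The (total extension of the) dual sequence `a_i^{(p)†}`:
`a_0 = p`, `a_1 = p + 1`, `a_{i+2} = d†(a_i)`. -/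
noncomputable def aSeqD (m : ℕ) (s t : ℕ → ℤ) (p : ℤ) : ℕ → WithTop ℤ
  | 0 => (p : WithTop ℤ)
  | 1 => ((p + 1 : ℤ) : WithTop ℤ)
  | i + 2 => dtW m s t (aSeqD m s t p i)

/-- The dual length `l_p†`: `l_n† = 0`, and for `p ≠ n` it is the least `j ≥ 1` with
`d†(a_{j-1}^{(p)†}) = d†(a_j^{(p)†})` (undefined values compared as `⊤`). -/
noncomputable def lSeqD (n : ℤ) (m : ℕ) (s t : ℕ → ℤ) (p : ℤ) : ℕ :=
  if p = n then 0
  else sInf {j : ℕ | 1 ≤ j ∧ dtW m s t (aSeqD m s t p (j - 1)) = dtW m s t (aSeqD m s t p j)}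

lemma dvalue_mono (m : ℕ) (s t : ℕ → ℤ) {p q : ℤ} (h : p ≤ q) :
    dvalue m s t p ≤ dvalue m s t q := by
  apply Finset.sup_mono
  exact Finset.monotone_filter_right _ (fun j _ hj => le_trans hj h)

lemma dvalue_spec (m : ℕ) (s t : ℕ → ℤ) (p : ℤ) (h : dvalue m s t p ≠ ⊥) :
    ∃ j, j < m ∧ t j ≤ p ∧ dvalue m s t p = (s j : WithBot ℤ) := by
  have hne : ((Finset.range m).filter (fun j => t j ≤ p)).Nonempty := by
    by_contra hempty
    rw [Finset.not_nonempty_iff_eq_empty] at hempty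
    exact h (by rw [dvalue, hempty, Finset.sup_empty])
  obtain ⟨j, hj, hsup⟩ := Finset.exists_mem_eq_sup _ hne (fun j => (s j : WithBot ℤ))
  simp only [Finset.mem_filter, Finset.mem_range] at hj
  exact ⟨j, hj.1, hj.2, hsup⟩

lemma dW_mono (m : ℕ) (s t : ℕ → ℤ) : Monotone (dW m s t) := by
  intro a b hab
  cases a with
  | bot => exact bot_le
  | coe x =>
    cases b with
    | bot => exact absurd hab (WithBot.not_coe_le_bot x)
    | coe y => exact dvalue_mono m s t (WithBot.coe_le_coe.mp hab)

theorem lemma_4_4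
    (n : ℤ) (m : ℕ) (s t : ℕ → ℤ)
    (hn : 0 ≤ n)
    (hsmono : ∀ i j : ℕ, i < j → j < m → s i < s j)
    (htmono : ∀ i j : ℕ, i < j → j < m → t i < t j)
    (hs0 : ∀ j : ℕ, j < m → 0 ≤ s j)
    (htn : ∀ j : ℕ, j < m → t j ≤ n)
    (hlen : ∀ j : ℕ, j < m → s j + 2 ≤ t j)
    (p : ℤ) (hp0 : 0 ≤ p) (hpn : p ≤ n)
    (i : ℕ) (hi1 : 1 ≤ i) (hil : i ≤ lSeq m s t p) :
    aSeq m s t p i ≠ ⊥ ∧ (0 : WithBot ℤ) ≤ aSeq m s t p i ∧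
      aSeq m s t p i < aSeq m s t p (i - 1) := by
  by_cases hp : p = 0
  · exfalso
    rw [lSeq, if_pos hp] at hil
    omega
  have hp1 : 1 ≤ p := lt_of_le_of_ne hp0 (Ne.symm hp)
  have hne : ∀ j : ℕ, 1 ≤ j → j < i →
      dW m s t (aSeq m s t p (j - 1)) ≠ dW m s t (aSeq m s t p j) := by
    intro j hj1 hji heq
    have hmem : j ∈ {j : ℕ | 1 ≤ j ∧
        dW m s t (aSeq m s t p (j - 1)) = dW m s t (aSeq m s t p j)} := ⟨hj1, heq⟩
    have hle := Nat.sInf_le hmem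
    rw [lSeq, if_neg hp] at hil
    omega
  have key : ∀ k : ℕ, 1 ≤ k → k ≤ i → aSeq m s t p k ≠ ⊥ ∧
      (0 : WithBot ℤ) ≤ aSeq m s t p k ∧ aSeq m s t p k < aSeq m s t p (k - 1) := by
    intro k
    induction k using Nat.strong_induction_on with
    | _ k ih =>
      intro hk1 hki
      match k, hk1, hki with
      | 1, _, _ =>
        refine ⟨WithBot.coe_ne_bot, ?_, ?_⟩
        · show (0 : WithBot ℤ) ≤ ((p - 1 : ℤ) : WithBot ℤ)
          exact_mod_cast (by omega : (0:ℤ) ≤ p - 1)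
        · show ((p - 1 : ℤ) : WithBot ℤ) < (p : WithBot ℤ)
          exact_mod_cast sub_one_lt p
      | (k + 2), _, hki =>
        have h1 := ih (k + 1) (by omega) (by omega) (by omega)
        obtain ⟨y, hy⟩ := WithBot.ne_bot_iff_exists.mp h1.1
        have hkbot : aSeq m s t p k ≠ ⊥ := by
          match k with
          | 0 => exact WithBot.coe_ne_bot
          | (k' + 1) => exact (ih (k' + 1) (by omega) (by omega) (by omega)).1
        obtain ⟨x, hx⟩ := WithBot.ne_bot_iff_exists.mp hkbot
        have hyx : y < x := by
          have := h1.2.2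
          rw [show (k + 1 - 1) = k from rfl, ← hx, ← hy] at this
          exact_mod_cast this
        have hy0 : (0 : ℤ) ≤ y := by
          have := h1.2.1
          rw [← hy] at this
          exact_mod_cast this
        have ha2 : aSeq m s t p (k + 2) = dvalue m s t x := by
          show dW m s t (aSeq m s t p k) = dvalue m s t x
          rw [← hx]; rfl
        have hdx : dvalue m s t x ≠ ⊥ := by
          intro hbot
          have hdy : dvalue m s t y = ⊥ := by
            have := dvalue_mono m s t (le_of_lt hyx)
            rw [hbot] at this
            exact le_bot_iff.mp this
          refine hne (k + 1) (by omega) (by omega) ?_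
          rw [show (k + 1 - 1) = k from rfl, ← hx, ← hy]
          show dvalue m s t x = dvalue m s t y
          rw [hbot, hdy]
        obtain ⟨j, hjm, htj, hdj⟩ := dvalue_spec m s t x hdx
        have hsj0 := hs0 j hjm
        have hsjlen := hlen j hjm
        refine ⟨?_, ?_, ?_⟩
        · rw [ha2, hdj]; exact WithBot.coe_ne_bot
        · rw [ha2, hdj]
          exact_mod_cast hsj0
        · rw [show (k + 2 - 1) = k + 1 from rfl]
          match k, hx, ha2, htj, hki with
          | 0, hx, ha2, htj, hki =>
            have hxp : x = p := by
              have : (x : WithBot ℤ) = (p : WithBot ℤ) := hx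
              exact_mod_cast this
            rw [ha2, hdj]
            show (↑(s j) : WithBot ℤ) < ((p - 1 : ℤ) : WithBot ℤ)
            exact_mod_cast (by omega : s j < p - 1)
          | (k' + 1), hx, ha2, htj, hki =>
            have hk := ih (k' + 1) (by omega) (by omega) (by omega)
            have hle : aSeq m s t p (k' + 3) ≤ aSeq m s t p (k' + 2) := by
              show dW m s t (aSeq m s t p (k' + 1)) ≤ dW m s t (aSeq m s t p k')
              exact dW_mono m s t (le_of_lt hk.2.2)
            rcases lt_or_eq_of_le hle with h | h
            · exact h
            · exfalso
              refine hne (k' + 1) (by omega) (by omega) ?_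
              exact h.symm
  exact key i hi1 (le_refl i)
end

section
/- (Lemma 4.9, second inversion formula) For every p ∈ {0, …, n} and every 0 ≤ j ≤ l_p†, setting q = a_j^{(p)†}, one has l_q ≥ j and a_j^{(q)} = p. -/
/-!
On integers, `d†` and `d` form a Galois connection: `d†(β) ≤ x ↔ β ≤ d(x)`, both sides saying
that some interval `[s_l, t_l]` lies inside `[β, x]`. The dual sequence `b_k = a_k^{(p)†}` is
strictly increasing for `k ≤ l_p†`, and the Galois connection turns `b_{r+2} ≤ x < b_{r+3}` into
`b_r ≤ d(x) < b_{r+1}`. Starting from `a_0^{(q)} = q = b_j` and `a_1^{(q)} = q - 1`, this gives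
`b_{j-i} ≤ a_i^{(q)} < b_{j-i+1}` for `i ≤ j`. Hence `a_j^{(q)} = p`, and `a^{(q)}` is strictly
decreasing up to index `j + 1`, so its stopping rule cannot fire before `j`.
-/
section
variable {m : ℕ} {s t : ℕ → ℤ}

@[simp] lemma dW_coe (x : ℤ) : dW m s t x = dvalue m s t x := rfl

@[simp] lemma dtW_coe (x : ℤ) : dtW m s t x = ddual m s t x := rfl

lemma aSeq_add_two (p : ℤ) (i : ℕ) : aSeq m s t p (i + 2) = dW m s t (aSeq m s t p i) := rfl

lemma aSeqD_add_two (p : ℤ) (i : ℕ) : aSeqD m s t p (i + 2) = dtW m s t (aSeqD m s t p i) := rfl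

lemma ddual_le_coe_iff {β x : ℤ} :
    ddual m s t β ≤ (x : WithTop ℤ) ↔ ∃ l < m, β ≤ s l ∧ t l ≤ x := by
  simp [ddual, Finset.inf_le_iff (WithTop.coe_lt_top x), and_assoc]

lemma coe_le_dvalue_iff {β x : ℤ} :
    (β : WithBot ℤ) ≤ dvalue m s t x ↔ ∃ l < m, β ≤ s l ∧ t l ≤ x := by
  simp only [dvalue, Finset.le_sup_iff (WithBot.bot_lt_coe β), Finset.mem_filter, Finset.mem_range,
    WithBot.coe_le_coe]
  exact exists_congr fun l => by tauto

lemma coe_le_dvalue_of_ddual_le {β x : ℤ} (h : ddual m s t β ≤ x) :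
    (β : WithBot ℤ) ≤ dvalue m s t x :=
  coe_le_dvalue_iff.2 (ddual_le_coe_iff.1 h)

lemma dvalue_lt_coe_of_lt_ddual {β x : ℤ} (h : (x : WithTop ℤ) < ddual m s t β) :
    dvalue m s t x < β := by
  rw [← not_le, coe_le_dvalue_iff, ← ddual_le_coe_iff]
  exact h.not_ge

lemma exists_dvalue_eq_mem_Ico {β β' x : ℤ} (hlo : ddual m s t β ≤ x)
    (hhi : (x : WithTop ℤ) < ddual m s t β') : ∃ y : ℤ, dvalue m s t x = y ∧ y ∈ Set.Ico β β' := by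
  have hβ := coe_le_dvalue_of_ddual_le hlo
  obtain ⟨y, hy⟩ := WithBot.ne_bot_iff_exists.1 (ne_bot_of_le_ne_bot WithBot.coe_ne_bot hβ)
  have hβ' := dvalue_lt_coe_of_lt_ddual hhi
  rw [← hy] at hβ hβ'
  exact ⟨y, hy.symm, WithBot.coe_le_coe.1 hβ, WithBot.coe_lt_coe.1 hβ'⟩

lemma ddual_mono : Monotone (ddual m s t) := fun x y hxy =>
  Finset.inf_mono fun l hl => by
    simp only [Finset.mem_filter] at hl ⊢
    exact ⟨hl.1, hxy.trans hl.2⟩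

lemma dtW_mono : Monotone (dtW m s t) := by
  intro a b hab
  induction b using WithTop.recTopCoe with
  | top => exact (le_top : _ ≤ (⊤ : WithTop ℤ))
  | coe y =>
    induction a using WithTop.recTopCoe with
    | top => exact absurd hab (not_le.2 (WithTop.coe_lt_top y))
    | coe x => exact ddual_mono (WithTop.coe_le_coe.1 hab)

section
variable (hlen : ∀ j : ℕ, j < m → s j + 2 ≤ t j)
include hlen

lemma coe_add_one_lt_ddual (p : ℤ) : ((p + 1 : ℤ) : WithTop ℤ) < ddual m s t p := by
  rw [← not_le, ddual_le_coe_iff]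
  rintro ⟨l, hl, hps, htp⟩
  linarith [hlen l hl]

lemma dvalue_le_sub_two (x : ℤ) : dvalue m s t x ≤ ((x - 2 : ℤ) : WithBot ℤ) := by
  refine Finset.sup_le fun l hl => WithBot.coe_le_coe.2 ?_
  simp only [Finset.mem_filter, Finset.mem_range] at hl
  linarith [hlen l hl.1]

lemma dW_le_sub_two {a : WithBot ℤ} {y : ℤ} (h : a ≤ y) : dW m s t a ≤ ((y - 2 : ℤ) : WithBot ℤ) := by
  induction a using WithBot.recBotCoe with
  | bot => exact bot_le
  | coe x => exact (dvalue_le_sub_two hlen x).trans (by simpa using WithBot.coe_le_coe.1 h)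

lemma aSeq_le_sub (q : ℤ) (k : ℕ) : aSeq m s t q k ≤ ((q - k : ℤ) : WithBot ℤ) := by
  induction k using Nat.twoStepInduction with
  | zero => simp [aSeq]
  | one => simp [aSeq]
  | more k ih _ =>
    rw [aSeq_add_two]
    refine (dW_le_sub_two hlen ih).trans_eq ?_
    push_cast
    ring_nf

lemma dW_eq_bot_of_le_one (hs0 : ∀ j : ℕ, j < m → 0 ≤ s j) {a : WithBot ℤ} (h : a ≤ (1 : ℤ)) :
    dW m s t a = ⊥ := by
  induction a using WithBot.recBotCoe with
  | bot => rfl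
  | coe x =>
    refine le_bot_iff.1 ((dW_coe x).trans_le (Finset.sup_le fun l hl => ?_))
    simp only [Finset.mem_filter, Finset.mem_range] at hl
    linarith [hlen l hl.1, hs0 l hl.1, WithBot.coe_le_coe.1 h]

lemma exists_lSeq_stop (hs0 : ∀ j : ℕ, j < m → 0 ≤ s j) (q : ℤ) :
    {k : ℕ | 1 ≤ k ∧ dW m s t (aSeq m s t q (k - 1)) = dW m s t (aSeq m s t q k)}.Nonempty := by
  have hsmall : ∀ k : ℕ, q.toNat + 1 ≤ k → dW m s t (aSeq m s t q k) = ⊥ := fun k hk =>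
    dW_eq_bot_of_le_one hlen hs0 <| (aSeq_le_sub hlen q k).trans <| WithBot.coe_le_coe.2 (by omega)
  exact ⟨q.toNat + 2, by omega, by rw [hsmall _ (by omega), hsmall _ (by omega)]⟩

lemma le_lSeq (hs0 : ∀ j : ℕ, j < m → 0 ≤ s j) {q : ℤ} (hq : q ≠ 0) {j : ℕ}
    (hanti : ∀ i ≤ j, aSeq m s t q (i + 1) < aSeq m s t q i) : j ≤ lSeq m s t q := by
  rw [lSeq, if_neg hq]
  refine le_csInf (exists_lSeq_stop hlen hs0 q) ?_
  rintro _ ⟨hk, hstop⟩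
  obtain ⟨k, rfl⟩ := Nat.exists_eq_add_of_le' hk
  by_contra! hkj
  exact (hanti (k + 2) (by omega)).ne hstop.symm

end

section
variable {n p : ℤ} {k : ℕ}

lemma dtW_aSeqD_ne (hk : k + 1 < lSeqD n m s t p) :
    dtW m s t (aSeqD m s t p k) ≠ dtW m s t (aSeqD m s t p (k + 1)) := by
  unfold lSeqD at hk
  split_ifs at hk
  · omega
  · exact fun h => Nat.notMem_of_lt_sInf hk ⟨by omega, h⟩

variable (hlen : ∀ j : ℕ, j < m → s j + 2 ≤ t j)
include hlen

lemma aSeqD_lt_succ (hk : k ≤ lSeqD n m s t p) : aSeqD m s t p k < aSeqD m s t p (k + 1) := by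
  induction k using Nat.twoStepInduction with
  | zero => exact WithTop.coe_lt_coe.2 (lt_add_one p)
  | one => exact coe_add_one_lt_ddual hlen p
  | more k ih _ =>
    rw [aSeqD_add_two, show k + 2 + 1 = k + 1 + 2 by rfl, aSeqD_add_two]
    exact (dtW_mono (ih (by omega)).le).lt_of_ne (dtW_aSeqD_ne (n := n) (by omega))

lemma exists_aSeqD_eq_coe (hk : k ≤ lSeqD n m s t p) : ∃ β : ℤ, aSeqD m s t p k = β := by
  obtain ⟨β, hβ⟩ := WithTop.ne_top_iff_exists.1 (aSeqD_lt_succ hlen hk).ne_top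
  exact ⟨β, hβ.symm⟩

lemma coe_lt_aSeqD (hk : k + 1 ≤ lSeqD n m s t p) : (p : WithTop ℤ) < aSeqD m s t p (k + 1) := by
  induction k with
  | zero => exact aSeqD_lt_succ hlen (n := n) (by omega)
  | succ k ih => exact (ih (by omega)).trans (aSeqD_lt_succ hlen (n := n) (by omega))

end

section
variable {n p q : ℤ} {j : ℕ} (hlen : ∀ j : ℕ, j < m → s j + 2 ≤ t j)
  (hj : j ≤ lSeqD n m s t p) (hq : aSeqD m s t p j = q)
include hlen hj hq

lemma aSeq_mem_Ico_aSeqD {i r : ℕ} (hir : i + r = j) :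
    ∃ x : ℤ, aSeq m s t q i = x ∧ aSeqD m s t p r ≤ x ∧ (x : WithTop ℤ) < aSeqD m s t p (r + 1) := by
  induction i using Nat.twoStepInduction generalizing r with
  | zero =>
    subst hir
    exact ⟨q, rfl, (zero_add r ▸ hq).le, zero_add r ▸ hq ▸ aSeqD_lt_succ hlen hj⟩
  | one =>
    obtain ⟨β, hβ⟩ := exists_aSeqD_eq_coe hlen ((by omega : r ≤ j).trans hj)
    have hβq : β < q := by
      have := aSeqD_lt_succ hlen ((by omega : r ≤ j).trans hj)
      rwa [hβ, show r + 1 = j by omega, hq, WithTop.coe_lt_coe] at this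
    refine ⟨q - 1, rfl, ?_, ?_⟩
    · rw [hβ, WithTop.coe_le_coe]; omega
    · rw [show r + 1 = j by omega, hq, WithTop.coe_lt_coe]; omega
  | more i ih _ =>
    obtain ⟨x, hx, hlo, hhi⟩ := ih (r := r + 2) (by omega)
    obtain ⟨β, hβ⟩ := exists_aSeqD_eq_coe hlen ((by omega : r ≤ j).trans hj)
    obtain ⟨β', hβ'⟩ := exists_aSeqD_eq_coe hlen ((by omega : r + 1 ≤ j).trans hj)
    rw [aSeqD_add_two, hβ, dtW_coe] at hlo
    rw [show r + 2 + 1 = r + 1 + 2 by rfl, aSeqD_add_two, hβ', dtW_coe] at hhi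
    obtain ⟨y, hy, hβy, hyβ'⟩ := exists_dvalue_eq_mem_Ico hlo hhi
    refine ⟨y, by rw [aSeq_add_two, hx, dW_coe, hy], ?_, ?_⟩
    · rw [hβ]; exact WithTop.coe_le_coe.2 hβy
    · rw [hβ']; exact WithTop.coe_lt_coe.2 hyβ'

lemma aSeq_eq_coe_of_aSeqD_eq : aSeq m s t q j = p := by
  obtain ⟨x, hx, hlo, hhi⟩ := aSeq_mem_Ico_aSeqD hlen hj hq (add_zero j)
  have hpx : p ≤ x := WithTop.coe_le_coe.1 hlo
  have hxp : x < p + 1 := WithTop.coe_lt_coe.1 hhi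
  rw [hx, show x = p by omega]

lemma aSeq_succ_lt_of_aSeqD_eq {i : ℕ} (hi : i ≤ j) : aSeq m s t q (i + 1) < aSeq m s t q i := by
  rcases hi.lt_or_eq with hij | rfl
  · obtain ⟨r, hr⟩ : ∃ r, i + 1 + r = j := ⟨j - (i + 1), by omega⟩
    obtain ⟨x, hx, -, hxr⟩ := aSeq_mem_Ico_aSeqD hlen hj hq hr
    obtain ⟨y, hy, hry, -⟩ := aSeq_mem_Ico_aSeqD hlen hj hq (i := i) (r := r + 1) (by omega)
    rw [hx, hy, WithBot.coe_lt_coe]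
    exact WithTop.coe_lt_coe.1 (hxr.trans_le hry)
  · rw [aSeq_eq_coe_of_aSeqD_eq hlen hj hq]
    rcases i with _ | k
    · have hpq : p = q := WithTop.coe_inj.1 hq
      exact WithBot.coe_lt_coe.2 (by omega)
    · obtain ⟨x, hx, -, hxr⟩ := aSeq_mem_Ico_aSeqD hlen hj hq (i := k) (r := 1) (by omega)
      rw [aSeq_add_two, hx, dW_coe]
      exact dvalue_lt_coe_of_lt_ddual hxr

end

end

theorem inversion_formula_second_general
    (n : ℤ) (m : ℕ) (s t : ℕ → ℤ)
    (hs0 : ∀ j : ℕ, j < m → 0 ≤ s j)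
    (hlen : ∀ j : ℕ, j < m → s j + 2 ≤ t j)
    (p : ℤ) (hp0 : 0 ≤ p)
    (j : ℕ) (hj : j ≤ lSeqD n m s t p)
    (q : ℤ) (hq : aSeqD m s t p j = (q : WithTop ℤ)) :
    j ≤ lSeq m s t q ∧ aSeq m s t q j = (p : WithBot ℤ) := by
  refine ⟨?_, aSeq_eq_coe_of_aSeqD_eq hlen hj hq⟩
  rcases j with _ | k
  · exact Nat.zero_le _
  have hpq : p < q := WithTop.coe_lt_coe.1 (hq ▸ coe_lt_aSeqD hlen hj)
  exact le_lSeq hlen hs0 (by omega) fun i hi => aSeq_succ_lt_of_aSeqD_eq hlen hj hq hi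

theorem inversion_formula_second
    (n : ℤ) (m : ℕ) (s t : ℕ → ℤ)
    (hn : 0 ≤ n)
    (hsmono : ∀ i j : ℕ, i < j → j < m → s i < s j)
    (htmono : ∀ i j : ℕ, i < j → j < m → t i < t j)
    (hs0 : ∀ j : ℕ, j < m → 0 ≤ s j)
    (htn : ∀ j : ℕ, j < m → t j ≤ n)
    (hlen : ∀ j : ℕ, j < m → s j + 2 ≤ t j)
    (p : ℤ) (hp0 : 0 ≤ p) (hpn : p ≤ n)
    (j : ℕ) (hj : j ≤ lSeqD n m s t p)
    (q : ℤ) (hq : aSeqD m s t p j = (q : WithTop ℤ)) :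
    j ≤ lSeq m s t q ∧ aSeq m s t q j = (p : WithBot ℤ) :=
  inversion_formula_second_general n m s t hs0 hlen p hp0 j hj q hq
end

section
/- If 1 ≤ p ≤ n and l_p ≥ 2, then there exists an index j with s_j = a_2^{(p)} and t_j = p; that is, the pair (a_2^{(p)}, p) is one of the given relation intervals [s_j, t_j]. -/
section dvalue

variable {m : ℕ} {s t : ℕ → ℤ}

theorem dvalue_sub_one_eq_of_forall_t_ne {p : ℤ} (hp : ∀ j < m, t j ≠ p) :
    dvalue m s t (p - 1) = dvalue m s t p := by
  unfold dvalue
  congr 1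
  refine Finset.filter_congr fun i hi => ?_
  have := hp i (Finset.mem_range.mp hi)
  omega

theorem dvalue_eq_of_t_eq (hsmono : ∀ i j : ℕ, i < j → j < m → s i < s j)
    (htmono : ∀ i j : ℕ, i < j → j < m → t i < t j) {j : ℕ} (hj : j < m) :
    dvalue m s t (t j) = s j := by
  refine le_antisymm (Finset.sup_le fun i hi => ?_) ?_
  · obtain ⟨him, hti⟩ := by simpa only [Finset.mem_filter, Finset.mem_range] using hi
    have hij : i ≤ j := by
      by_contra! hji
      exact (htmono j i hji him).not_ge hti
    rcases hij.eq_or_lt with rfl | hlt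
    · exact le_rfl
    · exact_mod_cast (hsmono i j hlt hj).le
  · exact Finset.le_sup (f := fun i => (s i : WithBot ℤ)) (by simp [hj])

theorem dvalue_ne_sub_one_of_two_le_lSeq {p : ℤ} (hp : p ≠ 0) (hl : 2 ≤ lSeq m s t p) :
    dvalue m s t (p - 1) ≠ dvalue m s t p := by
  intro h
  rw [lSeq, if_neg hp] at hl
  have : sInf {j : ℕ | 1 ≤ j ∧ dW m s t (aSeq m s t p (j - 1)) = dW m s t (aSeq m s t p j)} ≤ 1 :=
    Nat.sInf_le ⟨le_rfl, h.symm⟩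
  omega

end dvalue

theorem relation_of_a_two_general
    (m : ℕ) (s t : ℕ → ℤ)
    (hsmono : ∀ i j : ℕ, i < j → j < m → s i < s j)
    (htmono : ∀ i j : ℕ, i < j → j < m → t i < t j)
    (p : ℤ) (hp1 : 1 ≤ p)
    (hl : 2 ≤ lSeq m s t p) :
    ∃ j : ℕ, j < m ∧ (s j : WithBot ℤ) = aSeq m s t p 2 ∧ t j = p := by
  have hjump := dvalue_ne_sub_one_of_two_le_lSeq (by omega) hl
  by_contra! hnone
  refine hjump (dvalue_sub_one_eq_of_forall_t_ne fun j hj htj => ?_)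
  subst htj
  exact hnone j hj (dvalue_eq_of_t_eq hsmono htmono hj).symm rfl

theorem relation_of_a_two
    (n : ℤ) (m : ℕ) (s t : ℕ → ℤ)
    (hn : 0 ≤ n)
    (hsmono : ∀ i j : ℕ, i < j → j < m → s i < s j)
    (htmono : ∀ i j : ℕ, i < j → j < m → t i < t j)
    (hs0 : ∀ j : ℕ, j < m → 0 ≤ s j)
    (htn : ∀ j : ℕ, j < m → t j ≤ n)
    (hlen : ∀ j : ℕ, j < m → s j + 2 ≤ t j)
    (p : ℤ) (hp1 : 1 ≤ p) (hpn : p ≤ n)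
    (hl : 2 ≤ lSeq m s t p) :
    ∃ j : ℕ, j < m ∧ (s j : WithBot ℤ) = aSeq m s t p 2 ∧ t j = p :=
  relation_of_a_two_general m s t hsmono htmono p hp1 hl
end

section
/- (Combinatorial content of Corollary 4.7(1)) Fix integers n ≥ k ≥ 2 and take m = n − k + 1, s_j = j − 1 and t_j = k + j − 1 for 1 ≤ j ≤ m (so S = {0, 1, …, n − k}, T = {k, k + 1, …, n}, and every relation interval has length k). Then for every 1 ≤ p ≤ n: (i) if k divides p then l_p = 2(p/k), and otherwise l_p = 2⌊p/k⌋ + 1; (ii) a_{2l}^{(p)} = p − kl for every l with 2l ≤ l_p, and a_{2l+1}^{(p)} = p − kl − 1 for every l with 2l + 1 ≤ l_p. -/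
/-!
For the intervals `[j, j + k]` the map `d` is the shift `x ↦ x - k`, undefined below `k`.
Hence `a^{(p)}` interleaves the progressions `p, p - k, p - 2k, …` and `p - 1, p - 1 - k, …`:
`a_i = p - k⌊i/2⌋ - (i mod 2)` while this is nonnegative, and `a_i` is undefined afterwards.
For `k ≥ 2` this formula is strictly decreasing in `i`, so the stopping condition
`d(a_{j-1}) = d(a_j)`, i.e. `a_{j+1} = a_{j+2}`, first holds when `a_{j+1}` is undefined.
-/

def nonnegOrBot (x : ℤ) : WithBot ℤ := if 0 ≤ x then x else ⊥

lemma nonnegOrBot_of_nonneg {x : ℤ} (hx : 0 ≤ x) : nonnegOrBot x = x := if_pos hx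

lemma nonnegOrBot_of_neg {x : ℤ} (hx : x < 0) : nonnegOrBot x = ⊥ := if_neg (not_le.2 hx)

lemma nonnegOrBot_ne_of_lt {x y : ℤ} (hx : 0 ≤ x) (hyx : y < x) :
    nonnegOrBot x ≠ nonnegOrBot y := by
  rw [nonnegOrBot_of_nonneg hx, nonnegOrBot]
  split_ifs
  · exact fun h => hyx.ne' (WithBot.coe_injective h)
  · exact WithBot.coe_ne_bot

section Sequence

variable {m : ℕ} {s t : ℕ → ℤ} {p : ℤ}

lemma dW_aSeq_sub_one {j : ℕ} (hj : 1 ≤ j) :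
    dW m s t (aSeq m s t p (j - 1)) = aSeq m s t p (j + 1) := by
  obtain ⟨i, rfl⟩ := Nat.exists_eq_add_of_le' hj
  rfl

lemma lSeq_eq_of_isLeast (hp : p ≠ 0) {N : ℕ}
    (hN : IsLeast {j | 1 ≤ j ∧ aSeq m s t p (j + 1) = aSeq m s t p (j + 2)} N) :
    lSeq m s t p = N := by
  rw [lSeq, if_neg hp, ← hN.csInf_eq]
  congr 1
  ext j
  exact and_congr_right fun hj => by rw [dW_aSeq_sub_one hj]; rfl

end Sequence

section Intervals

variable {n k : ℤ} {m : ℕ} {s t : ℕ → ℤ}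

lemma dvalue_eq_nonnegOrBot (hm : (m : ℤ) = n - k + 1) (hsv : ∀ j < m, s j = j)
    (htv : ∀ j < m, t j = k + j) {x : ℤ} (hx : x ≤ n) :
    dvalue m s t x = nonnegOrBot (x - k) := by
  unfold dvalue
  by_cases hxk : 0 ≤ x - k
  · obtain ⟨c, hc⟩ := Int.eq_ofNat_of_zero_le hxk
    have hcm : c < m := by omega
    rw [nonnegOrBot_of_nonneg hxk]
    apply le_antisymm
    · refine Finset.sup_le fun j hj => ?_
      rw [Finset.mem_filter, Finset.mem_range] at hj
      have := htv j hj.1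
      rw [hsv j hj.1]
      exact WithBot.coe_le_coe.2 (by omega)
    · refine Finset.le_sup_of_le (b := c)
        (Finset.mem_filter.2 ⟨Finset.mem_range.2 hcm, by rw [htv c hcm]; omega⟩) ?_
      rw [hsv c hcm, hc]
  · rw [nonnegOrBot_of_neg (not_le.1 hxk), Finset.sup_eq_bot_iff]
    intro j hj
    rw [Finset.mem_filter, Finset.mem_range] at hj
    have := htv j hj.1
    omega

lemma dW_nonnegOrBot (hm : (m : ℤ) = n - k + 1) (hsv : ∀ j < m, s j = j)
    (htv : ∀ j < m, t j = k + j) (hk : 0 ≤ k) {x : ℤ} (hx : x ≤ n) :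
    dW m s t (nonnegOrBot x) = nonnegOrBot (x - k) := by
  by_cases hx0 : 0 ≤ x
  · rw [nonnegOrBot_of_nonneg hx0]
    exact dvalue_eq_nonnegOrBot hm hsv htv hx
  · rw [nonnegOrBot_of_neg (not_le.1 hx0), nonnegOrBot_of_neg (by omega)]
    rfl

end Intervals

section Formula

variable {k p : ℤ}

def aFormula (k p : ℤ) (i : ℕ) : ℤ := p - k * (i / 2 : ℕ) - (i % 2 : ℕ)

lemma aFormula_two_mul (l : ℕ) : aFormula k p (2 * l) = p - k * l := by
  simp [aFormula]

lemma aFormula_two_mul_add_one (l : ℕ) : aFormula k p (2 * l + 1) = p - k * l - 1 := by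
  simp [aFormula, Nat.mul_add_div]

lemma aFormula_add_two (i : ℕ) : aFormula k p (i + 2) = aFormula k p i - k := by
  simp only [aFormula, Nat.add_div_right i two_pos, Nat.add_mod_right]
  push_cast
  ring

lemma aFormula_strictAnti (hk : 2 ≤ k) : StrictAnti (aFormula k p) := by
  refine strictAnti_nat_of_succ_lt fun i => ?_
  obtain ⟨l, rfl | rfl⟩ := Nat.even_or_odd' i
  · rw [aFormula_two_mul, aFormula_two_mul_add_one]
    omega
  · rw [aFormula_two_mul_add_one, show 2 * l + 1 + 1 = 2 * (l + 1) by ring, aFormula_two_mul]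
    push_cast
    linarith

def lLength (k p : ℤ) : ℕ := 2 * (p / k).toNat + if k ∣ p then 0 else 1

lemma coe_lLength (hk : 0 ≤ k) (hp : 0 ≤ p) :
    (lLength k p : ℤ) = 2 * (p / k) + if k ∣ p then 0 else 1 := by
  rw [lLength]
  push_cast
  rw [Int.toNat_of_nonneg (Int.ediv_nonneg hp hk)]

lemma aFormula_lLength (hk : 0 < k) (hp : 0 ≤ p) :
    0 ≤ aFormula k p (lLength k p) ∧ aFormula k p (lLength k p + 1) < 0 := by
  obtain ⟨q, hq⟩ := Int.eq_ofNat_of_zero_le (Int.ediv_nonneg hp hk.le)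
  have hdiv : k * q + p % k = p := hq ▸ Int.mul_ediv_add_emod p k
  have hr0 : 0 ≤ p % k := Int.emod_nonneg p hk.ne'
  have hrk : p % k < k := Int.emod_lt_of_pos p hk
  rw [lLength, hq, Int.toNat_natCast]
  split_ifs with hkp
  · rw [Int.emod_eq_zero_of_dvd hkp] at hdiv
    rw [add_zero, aFormula_two_mul, aFormula_two_mul_add_one]
    omega
  · have hr1 : p % k ≠ 0 := fun h => hkp (Int.dvd_of_emod_eq_zero h)
    rw [aFormula_two_mul_add_one, show 2 * q + 1 + 1 = 2 * (q + 1) by ring, aFormula_two_mul]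
    push_cast
    rw [mul_add]
    constructor <;> omega

end Formula

section Corollary

variable {n k p : ℤ} {m : ℕ} {s t : ℕ → ℤ}

lemma aSeq_eq_nonnegOrBot (hm : (m : ℤ) = n - k + 1) (hsv : ∀ j < m, s j = j)
    (htv : ∀ j < m, t j = k + j) (hk : 2 ≤ k) (hp1 : 1 ≤ p) (hpn : p ≤ n) (i : ℕ) :
    aSeq m s t p i = nonnegOrBot (aFormula k p i) := by
  induction i using Nat.twoStepInduction with
  | zero => simp [aSeq, aFormula, nonnegOrBot_of_nonneg (by omega : 0 ≤ p)]
  | one => simp [aSeq, aFormula, nonnegOrBot_of_nonneg (by omega : 0 ≤ p - 1)]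
  | more i ih _ =>
    have hle : aFormula k p i ≤ n :=
      ((aFormula_strictAnti hk).antitone (Nat.zero_le i)).trans (by simpa [aFormula] using hpn)
    have hk0 : 0 ≤ k := by omega
    rw [aSeq, ih, dW_nonnegOrBot hm hsv htv hk0 hle, aFormula_add_two]

lemma isLeast_lLength (hm : (m : ℤ) = n - k + 1) (hsv : ∀ j < m, s j = j)
    (htv : ∀ j < m, t j = k + j) (hk : 2 ≤ k) (hp1 : 1 ≤ p) (hpn : p ≤ n) :
    IsLeast {j | 1 ≤ j ∧ aSeq m s t p (j + 1) = aSeq m s t p (j + 2)} (lLength k p) := by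
  have ha := aSeq_eq_nonnegOrBot hm hsv htv hk hp1 hpn
  have hanti := aFormula_strictAnti (p := p) hk
  obtain ⟨hpos, hneg⟩ := aFormula_lLength (k := k) (p := p) (by omega) (by omega)
  refine ⟨⟨?_, ?_⟩, fun j ⟨hj, hjeq⟩ => not_lt.1 fun hjN => ?_⟩
  · by_contra! h0
    rw [Nat.lt_one_iff.1 h0, show 0 + 1 = 2 * 0 + 1 from rfl, aFormula_two_mul_add_one] at hneg
    omega
  · rw [ha, ha, nonnegOrBot_of_neg hneg,
      nonnegOrBot_of_neg ((hanti (Nat.lt_succ_self _)).trans hneg)]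
  · rw [ha, ha] at hjeq
    exact nonnegOrBot_ne_of_lt (hpos.trans (hanti.antitone hjN)) (hanti (Nat.lt_succ_self _)) hjeq

lemma aSeq_eq_aFormula_of_le (hm : (m : ℤ) = n - k + 1) (hsv : ∀ j < m, s j = j)
    (htv : ∀ j < m, t j = k + j) (hk : 2 ≤ k) (hp1 : 1 ≤ p) (hpn : p ≤ n) {i : ℕ}
    (hi : i ≤ lLength k p) : aSeq m s t p i = aFormula k p i := by
  rw [aSeq_eq_nonnegOrBot hm hsv htv hk hp1 hpn, nonnegOrBot_of_nonneg]
  exact (aFormula_lLength (by omega) (by omega)).1.trans ((aFormula_strictAnti hk).antitone hi)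

end Corollary

theorem corollary_4_7_combinatorics_general
    (n : ℤ) (m : ℕ) (s t : ℕ → ℤ)
    (k : ℤ) (hk2 : 2 ≤ k)
    (hm : (m : ℤ) = n - k + 1)
    (hsv : ∀ j : ℕ, j < m → s j = (j : ℤ))
    (htv : ∀ j : ℕ, j < m → t j = k + (j : ℤ))
    (p : ℤ) (hp1 : 1 ≤ p) (hpn : p ≤ n) :
    ((k ∣ p → (lSeq m s t p : ℤ) = 2 * (p / k)) ∧
     (¬ k ∣ p → (lSeq m s t p : ℤ) = 2 * (p / k) + 1)) ∧
    (∀ l : ℕ, 2 * l ≤ lSeq m s t p →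
      aSeq m s t p (2 * l) = ((p - k * (l : ℤ) : ℤ) : WithBot ℤ)) ∧
    (∀ l : ℕ, 2 * l + 1 ≤ lSeq m s t p →
      aSeq m s t p (2 * l + 1) = ((p - k * (l : ℤ) - 1 : ℤ) : WithBot ℤ)) := by
  have hlen : lSeq m s t p = lLength k p :=
    lSeq_eq_of_isLeast (by omega) (isLeast_lLength hm hsv htv hk2 hp1 hpn)
  have hcoe := coe_lLength (k := k) (p := p) (by omega) (by omega)
  rw [hlen]
  refine ⟨⟨fun h => ?_, fun h => ?_⟩, fun l hl => ?_, fun l hl => ?_⟩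
  · rw [hcoe, if_pos h, add_zero]
  · rw [hcoe, if_neg h]
  · rw [aSeq_eq_aFormula_of_le hm hsv htv hk2 hp1 hpn hl, aFormula_two_mul]
  · rw [aSeq_eq_aFormula_of_le hm hsv htv hk2 hp1 hpn hl, aFormula_two_mul_add_one]

theorem corollary_4_7_combinatorics
    (n : ℤ) (m : ℕ) (s t : ℕ → ℤ)
    (hn : 0 ≤ n)
    (hsmono : ∀ i j : ℕ, i < j → j < m → s i < s j)
    (htmono : ∀ i j : ℕ, i < j → j < m → t i < t j)
    (hs0 : ∀ j : ℕ, j < m → 0 ≤ s j)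
    (htn : ∀ j : ℕ, j < m → t j ≤ n)
    (hlen : ∀ j : ℕ, j < m → s j + 2 ≤ t j)
    (k : ℤ) (hk2 : 2 ≤ k) (hkn : k ≤ n)
    (hm : (m : ℤ) = n - k + 1)
    (hsv : ∀ j : ℕ, j < m → s j = (j : ℤ))
    (htv : ∀ j : ℕ, j < m → t j = k + (j : ℤ))
    (p : ℤ) (hp1 : 1 ≤ p) (hpn : p ≤ n) :
    ((k ∣ p → (lSeq m s t p : ℤ) = 2 * (p / k)) ∧
     (¬ k ∣ p → (lSeq m s t p : ℤ) = 2 * (p / k) + 1)) ∧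
    (∀ l : ℕ, 2 * l ≤ lSeq m s t p →
      aSeq m s t p (2 * l) = ((p - k * (l : ℤ) : ℤ) : WithBot ℤ)) ∧
    (∀ l : ℕ, 2 * l + 1 ≤ lSeq m s t p →
      aSeq m s t p (2 * l + 1) = ((p - k * (l : ℤ) - 1 : ℤ) : WithBot ℤ)) :=
  corollary_4_7_combinatorics_general n m s t k hk2 hm hsv htv p hp1 hpn
end
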